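/- Let a be a nonzero integer and K = ℚ(ζ₃). Then the rank of the Mordell–Weil group E_a(K) equals 2 · rank E_a(ℚ), where E_a : y² = x³ + a. -/

import Mathlib

open Module

lemma rank_core (V V₀ : Type) [AddCommGroup V] [Module ℚ V] [AddCommGroup V₀] [Module ℚ V₀]
    (σ T : V →ₗ[ℚ] V) (ι : V₀ →ₗ[ℚ] V)
    (hσ : ∀ v, σ (σ v) = v)
    (hT : ∀ v, T (T v) + T v + v = 0)
    (hcomm : ∀ v, σ (T v) = T (T (σ v)))
    (hinj : Function.Injective ι)
    (hrange : LinearMap.range ι = LinearMap.ker (σ - LinearMap.id)) :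
    Module.finrank ℚ V = 2 * Module.finrank ℚ V₀ := by
  classical
  set Sp := LinearMap.ker (σ - LinearMap.id) with hSp
  set Sm := LinearMap.ker (σ + LinearMap.id) with hSm
  have memSp : ∀ v, v ∈ Sp ↔ σ v = v := by
    intro v; simp [hSp, LinearMap.mem_ker, sub_eq_zero]
  have memSm : ∀ v, v ∈ Sm ↔ σ v = -v := by
    intro v; simp [hSm, LinearMap.mem_ker, add_eq_zero_iff_eq_neg]
  have hTT : ∀ v, T (T v) = -v - T v := by
    intro v
    have h := hT v
    have h' : T (T v) + T v = -v := by
      rwa [add_eq_zero_iff_eq_neg] at h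
    rw [← h']; abel
  have hT3 : ∀ v, T (T (T v)) = v := by
    intro v
    rw [hTT (T v), hTT v]
    abel
  set U : V →ₗ[ℚ] V := T - T ∘ₗ T with hU
  have hUapp : ∀ v, U v = T v - T (T v) := fun v => rfl
  have hUU : ∀ v, U (U v) = (-3 : ℚ) • v := by
    intro v
    rw [hUapp, hUapp, map_sub, map_sub, hT3 v, hTT v]
    module
  have hσU : ∀ v, σ (U v) = - U (σ v) := by
    intro v
    rw [hUapp, hUapp, map_sub, hcomm v, hcomm (T v), hcomm v, hT3 (T (σ v))]
    abel
  have hUSp : ∀ v ∈ Sp, U v ∈ Sm := by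
    intro v hv
    rw [memSp] at hv
    rw [memSm, hσU, hv]
  have hUSm : ∀ v ∈ Sm, U v ∈ Sp := by
    intro v hv
    rw [memSm] at hv
    rw [memSp, hσU, hv, map_neg, neg_neg]
  have e : Sp ≃ₗ[ℚ] Sm :=
    { toFun := fun v => ⟨U v, hUSp v v.2⟩
      map_add' := by intro v w; ext; simp
      map_smul' := by intro c v; ext; simp
      invFun := fun w => ⟨(-3 : ℚ)⁻¹ • U w, Sp.smul_mem _ (hUSm w w.2)⟩
      left_inv := by
        intro v
        ext
        simp only [Submodule.coe_smul]
        rw [hUU, smul_smul]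
        norm_num
      right_inv := by
        intro w
        ext
        simp only [Submodule.coe_smul]
        rw [map_smul, hUU, smul_smul]
        norm_num }
  -- Sp ⊔ Sm = ⊤, Sp ⊓ Sm = ⊥
  have hsup : Sp ⊔ Sm = ⊤ := by
    rw [eq_top_iff]
    intro v _
    have hv : v = (2 : ℚ)⁻¹ • (v + σ v) + (2 : ℚ)⁻¹ • (v - σ v) := by
      rw [smul_add, smul_sub]
      module
    rw [hv]
    refine Submodule.add_mem_sup (Sp.smul_mem _ ?_) (Sm.smul_mem _ ?_)
    · rw [memSp, map_add, hσ]; abel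
    · rw [memSm, map_sub, hσ]; abel
  have hinf : Sp ⊓ Sm = ⊥ := by
    rw [eq_bot_iff]
    intro v hv
    obtain ⟨h1, h2⟩ := Submodule.mem_inf.mp hv
    rw [memSp] at h1
    rw [memSm] at h2
    have hveq : v = -v := h1.symm.trans h2
    have h3 : (2 : ℚ) • v = 0 := by
      rw [two_smul]
      nth_rewrite 2 [hveq]
      abel
    have : v = 0 := by
      have := congrArg (fun w => (2 : ℚ)⁻¹ • w) h3
      simpa [smul_smul] using this
    simp [this]
  -- rank computation
  have hrk : Module.rank ℚ V = Module.rank ℚ Sp + Module.rank ℚ Sm := by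
    have h' := Submodule.rank_sup_add_rank_inf_eq Sp Sm
    rw [hsup, hinf] at h'
    simp only [rank_bot, add_zero, rank_top] at h'
    exact h'
  have hrkeq : Module.rank ℚ Sm = Module.rank ℚ Sp := (e.symm).rank_eq
  have hV0 : Module.rank ℚ V₀ = Module.rank ℚ Sp := by
    rw [← hrange]
    exact (LinearEquiv.ofInjective ι hinj).rank_eq
  rw [Module.finrank, Module.finrank, hrk, hrkeq, hV0]
  rcases lt_or_ge (Module.rank ℚ Sp) Cardinal.aleph0 with h | h
  · rw [Cardinal.toNat_add h h]
    ring
  · rw [Cardinal.toNat_apply_of_aleph0_le h,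
      Cardinal.toNat_apply_of_aleph0_le (le_trans h (le_add_self))]


set_option linter.unusedSectionVars false

namespace CMAux

open Polynomial IntermediateField

variable {ζ : ℂ} (hζ : IsPrimitiveRoot ζ 3)

include hζ

lemma zeta_rel : ζ ^ 2 + ζ + 1 = 0 := by
  have h3 : ζ ^ 3 = 1 := hζ.pow_eq_one
  have h1 : ζ ≠ 1 := hζ.ne_one (by norm_num)
  have := sub_ne_zero.mpr h1
  apply mul_left_cancel₀ this
  rw [mul_zero]
  linear_combination h3

lemma zeta_integral : IsIntegral ℚ ζ := by
  refine ⟨X ^ 2 + X + 1, ?_, ?_⟩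
  · rw [← cyclotomic_three]
    exact (cyclotomic.monic 3 ℚ)
  · have := zeta_rel hζ
    simp only [eval₂_add, eval₂_pow, eval₂_X, eval₂_one]
    rw [← this]

lemma zeta_minpoly : minpoly ℚ ζ = X ^ 2 + X + 1 := by
  rw [← cyclotomic_three]
  exact (cyclotomic_eq_minpoly_rat hζ (by norm_num)).symm

noncomputable def Kpb : PowerBasis ℚ ℚ⟮ζ⟯ := IntermediateField.adjoin.powerBasis (zeta_integral hζ)

lemma Kpb_gen_coe : ((Kpb hζ).gen : ℂ) = ζ := rfl

lemma Kpb_gen_rel : (Kpb hζ).gen ^ 2 + (Kpb hζ).gen + 1 = 0 := by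
  have hinj : Function.Injective (algebraMap ℚ⟮ζ⟯ ℂ) := (algebraMap ℚ⟮ζ⟯ ℂ).injective
  apply hinj
  simp only [map_add, map_pow, map_one, map_zero]
  rw [show algebraMap ℚ⟮ζ⟯ ℂ (Kpb hζ).gen = ζ from rfl]
  exact zeta_rel hζ

lemma Kpb_dim : (Kpb hζ).dim = 2 := by
  have : (Kpb hζ).dim = (minpoly ℚ ζ).natDegree := rfl
  rw [this, zeta_minpoly hζ]
  compute_degree!

lemma Kpb_gen_sq_aeval : Polynomial.aeval ((Kpb hζ).gen ^ 2) (minpoly ℚ (Kpb hζ).gen) = 0 := by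
  have hmg : minpoly ℚ (Kpb hζ).gen = minpoly ℚ ζ := by
    have : (Kpb hζ).gen = AdjoinSimple.gen ℚ ζ := rfl
    rw [this]; exact IntermediateField.minpoly_gen ℚ ζ
  rw [hmg, zeta_minpoly hζ]
  simp only [map_add, map_pow, aeval_X, map_one]
  linear_combination ((Kpb hζ).gen ^ 2 - (Kpb hζ).gen + 1) * Kpb_gen_rel hζ

/-- complex conjugation on `ℚ(ζ₃)` as a `ℚ`-algebra hom, sending `gen ↦ gen²`. -/
noncomputable def sigmaHom : ℚ⟮ζ⟯ →ₐ[ℚ] ℚ⟮ζ⟯ :=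
  (Kpb hζ).lift ((Kpb hζ).gen ^ 2) (Kpb_gen_sq_aeval hζ)

lemma sigmaHom_gen : sigmaHom hζ (Kpb hζ).gen = (Kpb hζ).gen ^ 2 :=
  PowerBasis.lift_gen _ _ _

lemma sigmaHom_sigmaHom (x : ℚ⟮ζ⟯) : sigmaHom hζ (sigmaHom hζ x) = x := by
  have hcomp : (sigmaHom hζ).comp (sigmaHom hζ) = AlgHom.id ℚ ℚ⟮ζ⟯ := by
    apply (Kpb hζ).algHom_ext
    rw [AlgHom.comp_apply, sigmaHom_gen, map_pow, sigmaHom_gen, AlgHom.id_apply]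
    linear_combination (((Kpb hζ).gen)^2 - (Kpb hζ).gen) * Kpb_gen_rel hζ
  calc sigmaHom hζ (sigmaHom hζ x) = ((sigmaHom hζ).comp (sigmaHom hζ)) x := rfl
  _ = x := by rw [hcomp]; rfl

set_option synthInstance.maxHeartbeats 200000 in
lemma sigmaHom_fixed {x : ℚ⟮ζ⟯} (hx : sigmaHom hζ x = x) :
    ∃ q : ℚ, algebraMap ℚ ℚ⟮ζ⟯ q = x := by
  classical
  set g := (Kpb hζ).gen with hg
  have hgsq : g ^ 2 ≠ g := by
    intro hcon
    have hrel := Kpb_gen_rel hζ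
    rw [← hg] at hrel
    rw [hcon] at hrel
    -- 2g + 1 = 0 → g = -1/2, then rel fails... derive contradiction via ζ
    have : (g : ℂ) + g + 1 = 0 := by
      have := congrArg (algebraMap ℚ⟮ζ⟯ ℂ) hrel
      simpa only [map_add, map_one, map_zero, IntermediateField.algebraMap_apply] using this
    have hzeta : (g : ℂ) = ζ := rfl
    rw [hzeta] at this
    have h2 : ζ ^ 2 = ζ := by
      have := congrArg (algebraMap ℚ⟮ζ⟯ ℂ) hcon
      simpa only [map_pow, IntermediateField.algebraMap_apply, hzeta] using this
    have hrelC := zeta_rel hζ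
    have hne0 : ζ ≠ 0 := by
      intro hcon0
      rw [hcon0] at hrelC
      norm_num at hrelC
    have hne1 : ζ ≠ 1 := hζ.ne_one (by norm_num)
    have : ζ * (ζ - 1) = 0 := by linear_combination h2
    rcases mul_eq_zero.mp this with h | h
    · exact hne0 h
    · exact hne1 (by linear_combination h)
  -- basis expansion
  set B := (Kpb hζ).basis.reindex (finCongr (Kpb_dim hζ)) with hB
  have hB0 : B 0 = 1 := by
    rw [hB, Basis.reindex_apply, PowerBasis.coe_basis]
    norm_num
  have hB1 : B 1 = g := by
    rw [hB, Basis.reindex_apply, PowerBasis.coe_basis]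
    norm_num
    exact hg.symm
  have hsum := B.sum_repr x
  rw [Fin.sum_univ_two, hB0, hB1] at hsum
  set c0 := B.repr x 0
  set c1 := B.repr x 1
  have hσ : sigmaHom hζ x = c0 • (1 : ℚ⟮ζ⟯) + c1 • (g ^ 2) := by
    rw [← hsum]
    have hsm : ∀ (c : ℚ) (w : ℚ⟮ζ⟯), sigmaHom hζ (c • w) = c • sigmaHom hζ w :=
      fun c w => map_smul (sigmaHom hζ).toLinearMap c w
    rw [map_add, hsm, hsm, map_one]
    rw [show sigmaHom hζ g = g ^ 2 from sigmaHom_gen hζ]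
  rw [hx, ← hsum] at hσ
  have hc1 : c1 • g = c1 • g ^ 2 := by
    have := add_left_cancel hσ
    exact this
  have : c1 • (g ^ 2 - g) = 0 := by
    rw [smul_sub, ← hc1]
    abel
  rcases smul_eq_zero.mp this with h | h
  · refine ⟨c0, ?_⟩
    rw [h] at hsum
    rw [Algebra.algebraMap_eq_smul_one]
    rw [← hsum]
    simp
  · exact absurd (sub_eq_zero.mp h) hgsq

end CMAux


set_option linter.unusedSectionVars false

open WeierstrassCurve.Affine
open scoped WeierstrassCurve

namespace CMAux

variable {K0 : Type} [Field K0] [CharZero K0] [DecidableEq K0] {C : WeierstrassCurve.Affine K0}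

section zeta
variable {z : K0} (hz : z ^ 2 + z + 1 = 0)

include hz

lemma zeta_ne_zero : z ≠ 0 := by
  rintro rfl; norm_num at hz

lemma zeta_ne_one : z ≠ 1 := by
  rintro rfl; norm_num at hz

lemma zeta_cube : z ^ 3 = 1 := by
  linear_combination (z - 1) * hz

end zeta

variable (hc1 : C.a₁ = 0) (hc2 : C.a₂ = 0) (hc3 : C.a₃ = 0) (hc4 : C.a₄ = 0)
variable {z : K0} (hz : z ^ 2 + z + 1 = 0)

include hc1 hc3 in
lemma negY_eq (x y : K0) : C.negY x y = -y := by
  simp [negY, hc1, hc3]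

include hc1 hc2 hc3 hc4 hz in
lemma cm_equation {x y : K0} (h : C.Equation x y) : C.Equation (z * x) y := by
  rw [equation_iff, hc1, hc2, hc3, hc4] at h ⊢
  linear_combination h + (-x^3) * zeta_cube hz

include hc1 hc2 hc3 hc4 hz in
lemma cm_nonsingular {x y : K0} (h : C.Nonsingular x y) : C.Nonsingular (z * x) y := by
  rw [nonsingular_iff, hc1, hc2, hc3, hc4] at h ⊢
  obtain ⟨he, h⟩ := h
  refine ⟨cm_equation hc1 hc2 hc3 hc4 hz he, ?_⟩
  rcases h with h | h
  · left
    intro hcon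
    apply h
    have hz2 : z ^ 2 ≠ 0 := pow_ne_zero _ (zeta_ne_zero hz)
    have h0 : z ^ 2 * (3 * x ^ 2 + 2 * 0 * x + 0) = 0 := by linear_combination (-1 : K0) * hcon
    rcases mul_eq_zero.mp h0 with h0 | h0
    · exact absurd h0 hz2
    · rw [h0]; ring
  · right
    intro hcon
    apply h
    linear_combination hcon

include hc1 hc2 hc3 hc4 hz in
lemma cm_slope (x₁ x₂ y₁ y₂ : K0) :
    C.slope (z * x₁) (z * x₂) y₁ y₂ = z ^ 2 * C.slope x₁ x₂ y₁ y₂ := by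
  by_cases hx : x₁ = x₂
  · have hzx : z * x₁ = z * x₂ := by rw [hx]
    by_cases hy : y₁ = C.negY x₂ y₂
    · rw [slope_of_Y_eq hzx (by rwa [negY_eq hc1 hc3, ← negY_eq hc1 hc3 x₂]),
        slope_of_Y_eq hx hy, mul_zero]
    · rw [slope_of_Y_ne hzx (by rwa [negY_eq hc1 hc3, ← negY_eq hc1 hc3 x₂]),
        slope_of_Y_ne hx hy, ← mul_div_assoc]
      congr 1
      · rw [hc1, hc2, hc4]; ring
      · rw [negY_eq hc1 hc3, negY_eq hc1 hc3]
  · have hzx : z * x₁ ≠ z * x₂ := fun hcon => hx (mul_left_cancel₀ (zeta_ne_zero hz) hcon)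
    rw [slope_of_X_ne hzx, slope_of_X_ne hx, ← mul_div_assoc]
    rw [div_eq_div_iff (sub_ne_zero.mpr hzx) (sub_ne_zero.mpr hx)]
    linear_combination (-((y₁ - y₂) * (x₁ - x₂))) * zeta_cube hz

include hc1 hc2 hz in
lemma cm_addX (x₁ x₂ L : K0) :
    C.addX (z * x₁) (z * x₂) (z ^ 2 * L) = z * C.addX x₁ x₂ L := by
  rw [addX, addX, hc1, hc2]
  linear_combination (z * L ^ 2) * zeta_cube hz

include hc1 hc2 hz in
lemma cm_negAddY (x₁ x₂ y₁ L : K0) :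
    C.negAddY (z * x₁) (z * x₂) y₁ (z ^ 2 * L) = C.negAddY x₁ x₂ y₁ L := by
  rw [negAddY, negAddY, cm_addX hc1 hc2 hz]
  linear_combination (L * (C.addX x₁ x₂ L - x₁)) * zeta_cube hz

include hc1 hc2 hc3 hz in
lemma cm_addY (x₁ x₂ y₁ L : K0) :
    C.addY (z * x₁) (z * x₂) y₁ (z ^ 2 * L) = C.addY x₁ x₂ y₁ L := by
  rw [addY, addY, negY_eq hc1 hc3, negY_eq hc1 hc3, cm_negAddY hc1 hc2 hz]


/-- The CM map on points: `(x, y) ↦ (z * x, y)`. -/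
noncomputable def cmFun : C.Point → C.Point
  | .zero => .zero
  | .some _ _ h => .some _ _ (cm_nonsingular hc1 hc2 hc3 hc4 hz h)

lemma cmFun_some {x y : K0} (h : C.Nonsingular x y) :
    cmFun hc1 hc2 hc3 hc4 hz (Point.some _ _ h) =
      Point.some _ _ (cm_nonsingular hc1 hc2 hc3 hc4 hz h) := rfl

include hc1 hc2 hc3 hc4 hz in
lemma cmFun_add (P Q : C.Point) :
    cmFun hc1 hc2 hc3 hc4 hz (P + Q) =
      cmFun hc1 hc2 hc3 hc4 hz P + cmFun hc1 hc2 hc3 hc4 hz Q := by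
  rcases P with _ | @⟨x₁, y₁, h₁⟩ <;> rcases Q with _ | @⟨x₂, y₂, h₂⟩
  · rfl
  · exact (zero_add _).symm
  · exact (add_zero _).symm
  · by_cases hcase : x₁ = x₂ ∧ y₁ = C.negY x₂ y₂
    · rw [Point.add_of_Y_eq hcase.1 hcase.2]
      have hy' : y₁ = C.negY (z * x₂) y₂ := by
        rw [negY_eq hc1 hc3, ← negY_eq hc1 hc3 x₂]; exact hcase.2
      have hx' : z * x₁ = z * x₂ := by rw [hcase.1]
      show (0 : C.Point) = _
      exact (Point.add_of_Y_eq hx' hy').symm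
    · have himp : x₁ = x₂ → y₁ ≠ C.negY x₂ y₂ := fun hx hy => hcase ⟨hx, hy⟩
      have himp' : z * x₁ = z * x₂ → y₁ ≠ C.negY (z * x₂) y₂ := by
        intro hx hy
        exact hcase ⟨mul_left_cancel₀ (zeta_ne_zero hz) hx,
          by rw [negY_eq hc1 hc3]; rwa [negY_eq hc1 hc3] at hy⟩
      rw [Point.add_some (fun h => himp h.1 h.2)]
      simp only [cmFun_some]
      rw [Point.add_some (fun h => himp' h.1 h.2)]
      simp only [Point.some.injEq]
      rw [cm_slope hc1 hc2 hc3 hc4 hz, cm_addX hc1 hc2 hz, cm_addY hc1 hc2 hc3 hz]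
      exact ⟨rfl, rfl⟩

/-- The CM map as an `AddMonoidHom`. -/
noncomputable def cmHom : C.Point →+ C.Point where
  toFun := cmFun hc1 hc2 hc3 hc4 hz
  map_zero' := rfl
  map_add' := cmFun_add hc1 hc2 hc3 hc4 hz

lemma cmHom_zero : cmHom hc1 hc2 hc3 hc4 hz (0 : C.Point) = 0 := rfl

lemma cmHom_some {x y : K0} (h : C.Nonsingular x y) :
    cmHom hc1 hc2 hc3 hc4 hz (Point.some _ _ h) =
      Point.some _ _ (cm_nonsingular hc1 hc2 hc3 hc4 hz h) := rfl

include hc1 hc2 hc3 hc4 hz in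
lemma cm_cm_add_self (ha6 : C.a₆ ≠ 0) (P : C.Point) :
    cmHom hc1 hc2 hc3 hc4 hz (cmHom hc1 hc2 hc3 hc4 hz P) + cmHom hc1 hc2 hc3 hc4 hz P = -P := by
  rcases P with _ | @⟨x, y, h⟩
  · show (0 : C.Point) + 0 = -0
    simp
  · simp only [cmHom_some]
    by_cases hx0 : x = 0
    · subst hx0
      have hy0 : y ≠ 0 := by
        intro hcon
        apply ha6
        have he := h.1
        rw [equation_iff, hc1, hc2, hc3, hc4, hcon] at he
        linear_combination -he
      have hyne : y ≠ C.negY (z * 0) y := by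
        rw [negY_eq hc1 hc3]
        intro hcon
        apply hy0
        have h2 : (2 : K0) * y = 0 := by linear_combination hcon
        have := mul_eq_zero.mp h2
        rcases this with h | h
        · norm_num at h
        · exact h
      rw [Point.add_of_Y_ne hyne, Point.neg_some]
      have hL : C.slope (z * (z * 0)) (z * 0) y y = 0 := by
        rw [slope_of_Y_ne (by rw [mul_zero, mul_zero]) hyne, hc1, hc2, hc4]
        rw [mul_zero, mul_zero]
        norm_num
      simp only [Point.some.injEq]
      constructor
      · rw [hL, addX, hc1, hc2]
        ring
      · rw [hL, addY, negAddY, negY_eq hc1 hc3, negY_eq hc1 hc3]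
        ring
    · have hxne : z * (z * x) ≠ z * x := by
        intro hcon
        apply zeta_ne_one hz
        rw [← mul_assoc] at hcon
        have h2 : z * z = z := mul_right_cancel₀ hx0 hcon
        exact mul_left_cancel₀ (zeta_ne_zero hz) (by rw [mul_one]; exact h2)
      rw [Point.add_of_X_ne hxne, Point.neg_some]
      have hL : C.slope (z * (z * x)) (z * x) y y = 0 := by
        rw [slope_of_X_ne hxne, sub_self, zero_div]
      simp only [Point.some.injEq]
      constructor
      · rw [hL, addX, hc1, hc2]
        linear_combination (-x) * hz
      · rw [hL, addY, negAddY, negY_eq hc1 hc3, negY_eq hc1 hc3]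
        ring

end CMAux


open WeierstrassCurve.Affine TensorProduct
open scoped WeierstrassCurve

/-- The Mordell curve `y² = x³ + k` over `ℚ`. -/
def mordell (k : ℚ) : WeierstrassCurve.Affine ℚ :=
  { a₁ := 0, a₂ := 0, a₃ := 0, a₄ := 0, a₆ := k }

open Classical in
/-- The Mordell--Weil rank of `W` over `K`, i.e. `dim_ℚ (W(K) ⊗ ℚ)`. -/
noncomputable def mwRank (W : WeierstrassCurve.Affine ℚ) (K : Type) [Field K] [Algebra ℚ K] : ℕ :=
  Module.finrank ℚ (ℚ ⊗[ℤ] WeierstrassCurve.Affine.Point (WeierstrassCurve.Affine.baseChange W K))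

namespace CMAux

instance : Module.Flat ℤ ℚ := IsLocalization.flat ℚ (nonZeroDivisors ℤ)

/-- Tensoring an additive map with `ℚ`. -/
noncomputable def tensorHom {G H : Type} [AddCommGroup G] [AddCommGroup H] (f : G →+ H) :
    (ℚ ⊗[ℤ] G) →ₗ[ℚ] (ℚ ⊗[ℤ] H) :=
  (LinearMap.lTensor ℚ f.toIntLinearMap).toAddMonoidHom.toRatLinearMap

lemma tensorHom_tmul {G H : Type} [AddCommGroup G] [AddCommGroup H] (f : G →+ H)
    (q : ℚ) (g : G) : tensorHom f (q ⊗ₜ[ℤ] g) = q ⊗ₜ[ℤ] f g := rfl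

lemma tensorHom_injective {G H : Type} [AddCommGroup G] [AddCommGroup H] (f : G →+ H)
    (hf : Function.Injective f) : Function.Injective (tensorHom f) :=
  Module.Flat.lTensor_preserves_injective_linearMap f.toIntLinearMap hf

end CMAux

set_option maxHeartbeats 2000000 in
/-- For `K = ℚ(ζ₃)`, the rank of `E_a(K)` is twice the rank of `E_a(ℚ)`. -/
theorem rank_over_Q_zeta3 (a : ℤ) (ha : a ≠ 0) (ζ : ℂ) (hζ : IsPrimitiveRoot ζ 3) :
    mwRank (mordell (a : ℚ)) (IntermediateField.adjoin ℚ ({ζ} : Set ℂ)) =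
      2 * mwRank (mordell (a : ℚ)) ℚ := by
  classical
  open CMAux in
  unfold mwRank
  set W := mordell (a : ℚ) with hW
  set K := IntermediateField.adjoin ℚ ({ζ} : Set ℂ) with hK
  letI : DecidableEq ↥K := fun a b => Classical.propDecidable (a = b)
  letI : DecidableEq ℚ := fun a b => Classical.propDecidable (a = b)
  haveI : CharZero ↥K := charZero_of_injective_algebraMap (algebraMap ℚ ↥K).injective
  set C : WeierstrassCurve.Affine ↥K := W.baseChange ↥K with hC
  have hc1 : C.a₁ = 0 := by simp [hC, hW, mordell]
  have hc2 : C.a₂ = 0 := by simp [hC, hW, mordell]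
  have hc3 : C.a₃ = 0 := by simp [hC, hW, mordell]
  have hc4 : C.a₄ = 0 := by simp [hC, hW, mordell]
  have ha6 : C.a₆ ≠ 0 := by
    simp only [hC, hW, mordell, WeierstrassCurve.map_a₆]
    show algebraMap ℚ ↥K ((a : ℤ) : ℚ) ≠ 0
    rw [map_ne_zero_iff _ (algebraMap ℚ ↥K).injective]
    exact_mod_cast ha
  set z : ↥K := (CMAux.Kpb hζ).gen with hzdef
  have hz : z ^ 2 + z + 1 = 0 := CMAux.Kpb_gen_rel hζ
  -- the three group endomorphisms of W⟮K⟯ and the base-change map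
  set cm : WeierstrassCurve.Affine.Point (W.baseChange ↥K) →+ WeierstrassCurve.Affine.Point (W.baseChange ↥K) := CMAux.cmHom hc1 hc2 hc3 hc4 hz with hcm
  set Sig : WeierstrassCurve.Affine.Point (W.baseChange ↥K) →+ WeierstrassCurve.Affine.Point (W.baseChange ↥K) := Point.map (W' := W) (CMAux.sigmaHom hζ) with hSig
  set iota : WeierstrassCurve.Affine.Point (W.baseChange ℚ) →+ WeierstrassCurve.Affine.Point (W.baseChange ↥K) := Point.map (W' := W) (Algebra.ofId ℚ ↥K) with hiota
  -- pointwise group lemmas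
  have hSigSig : ∀ P, Sig (Sig P) = P := by
    rintro (_ | @⟨x, y, h⟩)
    · rfl
    · rw [hSig, Point.map_some, Point.map_some]
      simp only [Point.some.injEq]
      exact ⟨CMAux.sigmaHom_sigmaHom hζ x, CMAux.sigmaHom_sigmaHom hζ y⟩
  have hTrel : ∀ P, cm (cm P) + cm P + P = 0 := by
    intro P
    rw [hcm, CMAux.cm_cm_add_self hc1 hc2 hc3 hc4 hz ha6 P, neg_add_cancel]
  have hcomm : ∀ P, Sig (cm P) = cm (cm (Sig P)) := by
    rintro (_ | @⟨x, y, h⟩)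
    · rfl
    · rw [hcm, hSig, CMAux.cmHom_some, Point.map_some, Point.map_some, CMAux.cmHom_some,
        CMAux.cmHom_some]
      simp only [Point.some.injEq, and_true]
      rw [map_mul, show CMAux.sigmaHom hζ z = z ^ 2 from CMAux.sigmaHom_gen hζ]
      ring
  have hSigIota : ∀ Q, Sig (iota Q) = iota Q := by
    rintro (_ | @⟨x, y, h⟩)
    · rfl
    · simp only [hSig, hiota, Point.map_some]
      simp only [Point.some.injEq]
      constructor
      · exact (CMAux.sigmaHom hζ).commutes x
      · exact (CMAux.sigmaHom hζ).commutes y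
  have hfix : ∀ P, Sig P = P → ∃ Q, iota Q = P := by
    rintro (_ | @⟨x, y, h⟩) hP
    · exact ⟨0, rfl⟩
    · rw [hSig, Point.map_some] at hP
      obtain ⟨hx, hy⟩ := Point.some.inj hP
      obtain ⟨qx, hqx⟩ := CMAux.sigmaHom_fixed hζ hx
      obtain ⟨qy, hqy⟩ := CMAux.sigmaHom_fixed hζ hy
      have hfq : ∀ q : ℚ, (Algebra.ofId ℚ ↥K) q = algebraMap ℚ ↥K q := fun q => rfl
      have h' : (W.baseChange ℚ).Nonsingular qx qy := by
        rw [← W.baseChange_nonsingular (f := Algebra.ofId ℚ ↥K)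
          (Algebra.ofId ℚ ↥K).injective qx qy, hfq, hfq, hqx, hqy]
        exact h
      refine ⟨Point.some _ _ h', ?_⟩
      rw [hiota, Point.map_some]
      simp only [Point.some.injEq]
      exact ⟨hqx, hqy⟩
  have hiota_inj : Function.Injective iota := by
    rw [hiota]; exact Point.map_injective (W' := W) (Algebra.ofId ℚ ↥K)
  -- tensor level
  set σV := CMAux.tensorHom Sig with hσV
  set TV := CMAux.tensorHom cm with hTV
  set ιV := CMAux.tensorHom iota with hιV
  have hσVσV : ∀ v, σV (σV v) = v := by
    intro v
    induction v using TensorProduct.induction_on with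
    | zero => simp
    | tmul q g => rw [hσV, CMAux.tensorHom_tmul, CMAux.tensorHom_tmul, hSigSig]
    | add v w hv hw => rw [map_add, map_add, hv, hw]
  have hTVrel : ∀ v, TV (TV v) + TV v + v = 0 := by
    set E : (ℚ ⊗[ℤ] WeierstrassCurve.Affine.Point (W.baseChange ↥K)) →ₗ[ℚ] (ℚ ⊗[ℤ] WeierstrassCurve.Affine.Point (W.baseChange ↥K)) := (TV ∘ₗ TV) + TV + LinearMap.id with hE
    have hEapp : ∀ v, E v = TV (TV v) + TV v + v := fun v => rfl
    have key : ∀ v, E v = 0 := by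
      intro v
      induction v using TensorProduct.induction_on with
      | zero => simp
      | tmul q g =>
          rw [hEapp, hTV, CMAux.tensorHom_tmul, CMAux.tensorHom_tmul, ← TensorProduct.tmul_add,
            ← TensorProduct.tmul_add, hTrel, TensorProduct.tmul_zero]
      | add v w hv hw => rw [map_add, hv, hw, add_zero]
    intro v
    rw [← hEapp, key]
  have hcommV : ∀ v, σV (TV v) = TV (TV (σV v)) := by
    set E1 : (ℚ ⊗[ℤ] WeierstrassCurve.Affine.Point (W.baseChange ↥K)) →ₗ[ℚ] (ℚ ⊗[ℤ] WeierstrassCurve.Affine.Point (W.baseChange ↥K)) := σV ∘ₗ TV with hE1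
    set E2 : (ℚ ⊗[ℤ] WeierstrassCurve.Affine.Point (W.baseChange ↥K)) →ₗ[ℚ] (ℚ ⊗[ℤ] WeierstrassCurve.Affine.Point (W.baseChange ↥K)) := TV ∘ₗ (TV ∘ₗ σV) with hE2
    have hE1app : ∀ v, E1 v = σV (TV v) := fun v => rfl
    have hE2app : ∀ v, E2 v = TV (TV (σV v)) := fun v => rfl
    have key : ∀ v, E1 v = E2 v := by
      intro v
      induction v using TensorProduct.induction_on with
      | zero => simp
      | tmul q g =>
          rw [hE1app, hE2app, hσV, hTV]
          simp only [CMAux.tensorHom_tmul]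
          rw [hcomm]
      | add v w hv hw => rw [map_add, map_add, hv, hw]
    intro v
    rw [← hE1app, ← hE2app, key]
  have hιV_inj : Function.Injective ιV := CMAux.tensorHom_injective iota hiota_inj
  have hrange : LinearMap.range ιV = LinearMap.ker (σV - LinearMap.id) := by
    apply le_antisymm
    · rintro _ ⟨u, rfl⟩
      rw [LinearMap.mem_ker, LinearMap.sub_apply, LinearMap.id_apply, sub_eq_zero]
      induction u using TensorProduct.induction_on with
      | zero => simp
      | tmul q g =>
          rw [hιV, hσV, CMAux.tensorHom_tmul, CMAux.tensorHom_tmul, hSigIota]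
      | add v w hv hw => simp only [map_add]; rw [hv, hw]
    · intro v hv
      rw [LinearMap.mem_ker, LinearMap.sub_apply, LinearMap.id_apply, sub_eq_zero] at hv
      have hNv : ∀ w, w + σV w ∈ LinearMap.range ιV := by
        intro w
        induction w using TensorProduct.induction_on with
        | zero => simpa using Submodule.zero_mem _
        | tmul q g =>
            rw [hσV, CMAux.tensorHom_tmul, ← TensorProduct.tmul_add]
            have hfx : Sig (g + Sig g) = g + Sig g := by
              rw [map_add, hSigSig, add_comm]
            obtain ⟨Q, hQ⟩ := hfix _ hfx
            exact ⟨q ⊗ₜ[ℤ] Q, by rw [hιV, CMAux.tensorHom_tmul, hQ]⟩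
        | add v w hv' hw' =>
            have : (v + w) + σV (v + w) = (v + σV v) + (w + σV w) := by
              rw [map_add]; abel
            rw [this]
            exact Submodule.add_mem _ hv' hw'
      have hv2 : v = (2 : ℚ)⁻¹ • (v + σV v) := by
        rw [hv, smul_add]
        module
      rw [hv2]
      exact Submodule.smul_mem _ _ (hNv v)
  exact rank_core (ℚ ⊗[ℤ] WeierstrassCurve.Affine.Point (W.baseChange ↥K)) (ℚ ⊗[ℤ] WeierstrassCurve.Affine.Point (W.baseChange ℚ)) σV TV ιV hσVσV hTVrel hcommV hιV_inj hrange
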